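/- Let G be an r-regular simple graph with n vertices and m edges, where r ≥ 2 (so that m ≥ n), and let q_1 ≤ q_2 ≤ … ≤ q_n = 2r be the eigenvalues of Q(G) listed with multiplicity. Then f(λ, G^{0+1}) = [(λ-m)(λ-n-4r+4) - mn]·(λ-n-2r+4)^{m-n}·(λ-m)^{n-1}·∏_{i=1}^{n-1}(λ - n - 2r + 4 - q_i). -/

import Mathlib

open Classical

/-- The four symbols `0, 1, +, -` used in `xyz`-transformations. -/
inductive XYZ : Type
  | zero | one | plus | minus

namespace XYZ

/-- The relation on the vertices of a graph `H` given by a symbol: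
`0` gives the empty graph, `1` the complete graph, `+` the graph itself,
`-` its complement. -/
def rel {W : Type*} (H : SimpleGraph W) : XYZ → W → W → Prop
  | .zero => fun _ _ => False
  | .one  => fun u v => u ≠ v
  | .plus => fun u v => H.Adj u v
  | .minus => fun u v => u ≠ v ∧ ¬ H.Adj u v

/-- The incidence relation between a vertex and an edge given by a symbol `z`:
`+` means incident, `-` means non-incident, `0` never, `1` always. -/
def inc {W : Type*} (G : SimpleGraph W) : XYZ → W → G.edgeSet → Prop
  | .zero => fun _ _ => False
  | .one  => fun _ _ => True
  | .plus => fun v e => v ∈ (e : Sym2 W)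
  | .minus => fun v e => v ∉ (e : Sym2 W)

theorem rel_symm {W : Type*} (H : SimpleGraph W) (x : XYZ) {u v : W}
    (h : rel H x u v) : rel H x v u := by
  cases x with
  | zero => exact h.elim
  | one => exact (h : u ≠ v).symm
  | plus => exact H.adj_symm h
  | minus => exact ⟨(h.1).symm, fun h' => h.2 (H.adj_symm h')⟩

theorem rel_irrefl {W : Type*} (H : SimpleGraph W) (x : XYZ) {u : W}
    (h : rel H x u u) : False := by
  cases x with
  | zero => exact h
  | one => exact h rfl
  | plus => exact H.ne_of_adj h rfl
  | minus => exact h.1 rfl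

end XYZ

/-- The `xyz`-transformation `G^{xyz}` of a graph `G`: its vertex set is
`V(G) ⊕ E(G)`; two vertices of `G` are adjacent according to the symbol `x`
(applied to `G`), two edges according to the symbol `y` (applied to the line
graph of `G`), and a vertex and an edge according to the symbol `z`
(`+` = incidence graph `B(G)`, `-` = non-incidence graph `B^c(G)`,
`0` = no vertex-edge edges, `1` = all vertex-edge edges). -/
def xyzTransform {V : Type*} (G : SimpleGraph V) (x y z : XYZ) :
    SimpleGraph (V ⊕ G.edgeSet) where
  Adj a b :=
    match a, b with
    | Sum.inl u, Sum.inl v => XYZ.rel G x u v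
    | Sum.inr e, Sum.inr f => XYZ.rel G.lineGraph y e f
    | Sum.inl v, Sum.inr e => XYZ.inc G z v e
    | Sum.inr e, Sum.inl v => XYZ.inc G z v e
  symm := by
    constructor
    rintro (u | e) (v | f) h
    · exact XYZ.rel_symm G x h
    · exact h
    · exact h
    · exact XYZ.rel_symm G.lineGraph y h
  loopless := by
    constructor
    rintro (u | e) h
    · exact XYZ.rel_irrefl G x h
    · exact XYZ.rel_irrefl G.lineGraph y h

/-- The signless Laplacian matrix `Q(G) = D(G) + A(G)` of a graph. -/
noncomputable def signlessLaplacian {V : Type*} [Fintype V] (G : SimpleGraph V) :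
    Matrix V V ℝ :=
  Matrix.of fun u v =>
    (if u = v then (G.degree u : ℝ) else 0) + (if G.Adj u v then 1 else 0)

/-- The signless Laplacian characteristic polynomial
`f(λ, G) = det (λ I - Q(G))`, evaluated at a real number `λ`. -/
noncomputable def fQ {V : Type*} [Fintype V] (G : SimpleGraph V) (lam : ℝ) : ℝ :=
  Matrix.det (lam • (1 : Matrix V V ℝ) - signlessLaplacian G)

/-!
Let `N` be the vertex–edge incidence matrix of `G`. Then `Q(G) = N Nᵀ`, and for `r`-regular `G`
the line graph is `(2r - 2)`-regular with `Q(L(G)) = Nᵀ N + (2r - 4) I`; since `N Nᵀ` and `Nᵀ N`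
have the same characteristic polynomial up to a power of `λ`,
`f(λ, L(G)) = (λ - 2r + 4)^(m - n) f(λ - 2r + 4, G)`.

In `G^{0+1}` every vertex is joined to all `m` edges and two edges are joined as in `L(G)`, so
`λI - Q(G^{0+1})` has diagonal blocks `(λ - m) I` and `(λ - n) I - Q(L(G))` and off-diagonal blocks
`-J`. The second diagonal block has constant row sums `λ - n - 4r + 4`, so after a Schur complement
the all-ones perturbation contributes only a scalar factor. This computes `f(λ, G^{0+1})` for
`λ ∉ {m, n + 4r - 4}`, and continuity in `λ` removes the restriction.
-/

open Matrix

namespace Matrix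

variable {ι κ K : Type*} [Field K] [Fintype ι] [DecidableEq ι] [Fintype κ] [DecidableEq κ]

theorem det_smul_one_sub_eq_eval_charpoly {R : Type*} [CommRing R] (A : Matrix κ κ R) (x : R) :
    det (x • 1 - A) = A.charpoly.eval x := by
  rw [eval_charpoly, smul_one_eq_diagonal, scalar_apply]

theorem mul_det_sub_smul_allOnes {M : Matrix κ κ K} {b : K} (hM : ∀ i, ∑ j, M i j = b)
    (hb : b ≠ 0) (c : K) :
    b * det (M - c • (of fun _ _ => 1 : Matrix κ κ K)) = (b - c * Fintype.card κ) * det M := by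
  -- `M J = b J`, so `M - c J = M (I - (c / b) J)`.
  have hfactor : M - c • (of fun _ _ => 1 : Matrix κ κ K) =
      M * (1 + replicateCol Unit (fun _ => -(c / b)) *
        replicateRow Unit (fun _ : κ => (1 : K))) := by
    rw [Matrix.mul_add, Matrix.mul_one, ← Matrix.mul_assoc, sub_eq_add_neg]
    congr 1
    ext i j
    simp [mul_apply, ← Finset.sum_mul, hM]
    field_simp
  rw [hfactor, det_mul, det_one_add_replicateCol_mul_replicateRow]
  simp only [dotProduct, one_mul, Finset.sum_const, Finset.card_univ, nsmul_eq_mul]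
  field_simp
  ring

theorem mul_det_fromBlocks_smul_one_neg_allOnes {a b : K} (ha : a ≠ 0) (hb : b ≠ 0)
    {M : Matrix κ κ K} (hM : ∀ i, ∑ j, M i j = b) :
    a * b * det (fromBlocks (a • 1) (-of fun _ _ => 1) (-of fun (_ : κ) (_ : ι) => 1) M) =
      a ^ Fintype.card ι * (a * b - Fintype.card ι * Fintype.card κ) * det M := by
  have hsplit : fromBlocks (a • 1) (-of fun _ _ => 1) (-of fun (_ : κ) (_ : ι) => 1) M =
      fromBlocks (a • 1) 0 0 1 *
        fromBlocks (1 : Matrix ι ι K) (-of fun _ _ => a⁻¹) (-of fun _ _ => 1) M := by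
    rw [fromBlocks_multiply]
    congr 1 <;> ext <;> simp [ha]
  have hJJ : (of fun _ _ => 1 : Matrix κ ι K) * (of fun _ _ => a⁻¹ : Matrix ι κ K) =
      (Fintype.card ι / a) • (of fun _ _ => 1 : Matrix κ κ K) := by
    ext i j
    simp [mul_apply, div_eq_mul_inv]
  rw [hsplit, det_mul, det_fromBlocks_zero₂₁, det_fromBlocks_one₁₁, Matrix.neg_mul, Matrix.mul_neg,
    neg_neg, hJJ, det_one, mul_one, det_smul, det_one, mul_one, mul_left_comm, mul_assoc,
    mul_det_sub_smul_allOnes hM hb]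
  field_simp

end Matrix

theorem Fin.prod_univ_eq_mul_prod_castLE {M : Type*} [CommMonoid M] {n : ℕ} (hn : 0 < n)
    (f : Fin n → M) :
    ∏ i, f i = f ⟨n - 1, by omega⟩ * ∏ i : Fin (n - 1), f (Fin.castLE (Nat.sub_le n 1) i) := by
  obtain ⟨k, rfl⟩ : ∃ k, n = k + 1 := ⟨n - 1, by omega⟩
  rw [Fin.prod_univ_castSucc, mul_comm]
  rfl

theorem Sym2.eq_of_ne_of_mem_of_mem {α : Type*} {z z' : Sym2 α} (hz : z ≠ z') {v w : α}
    (hv : v ∈ z) (hv' : v ∈ z') (hw : w ∈ z) (hw' : w ∈ z') : v = w := by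
  by_contra hvw
  exact hz <| ((Sym2.mem_and_mem_iff hvw).1 ⟨hv, hw⟩).trans
    ((Sym2.mem_and_mem_iff hvw).1 ⟨hv', hw'⟩).symm

section SignlessLaplacian

variable {W : Type*} [Fintype W] (H : SimpleGraph W)

theorem SimpleGraph.sum_ite_adj_eq_degree [DecidableRel H.Adj] (u : W) :
    ∑ v, (if H.Adj u v then (1 : ℝ) else 0) = H.degree u := by
  rw [Finset.sum_boole, ← card_neighborFinset_eq_degree, neighborFinset_eq_filter]

theorem sum_signlessLaplacian_apply (u : W) :
    ∑ v, signlessLaplacian H u v = 2 * H.degree u := by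
  simp only [signlessLaplacian, of_apply, Finset.sum_add_distrib, Finset.sum_ite_eq,
    Finset.mem_univ, if_true, H.sum_ite_adj_eq_degree]
  ring

theorem continuous_fQ : Continuous (fQ H) := by
  unfold fQ
  fun_prop

end SignlessLaplacian

namespace SimpleGraph

section IncidenceMatrix

variable {V : Type*} (G : SimpleGraph V)

noncomputable def edgeIncMatrix : Matrix V G.edgeSet ℝ :=
  (G.incMatrix ℝ).submatrix id Subtype.val

theorem edgeIncMatrix_apply (v : V) (e : G.edgeSet) :
    G.edgeIncMatrix v e = if v ∈ (e : Sym2 V) then 1 else 0 := by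
  simp [edgeIncMatrix, incMatrix_apply', incidenceSet, e.2]

variable [Fintype V]

theorem sum_edgeSet_eq_sum_sym2 {M : Type*} [AddCommMonoid M] (f : Sym2 V → M)
    (hf : ∀ e ∉ G.edgeSet, f e = 0) : ∑ e : G.edgeSet, f e = ∑ e, f e := by
  have hnot : ∑ e : {e // e ∉ G.edgeSet}, f e = 0 := Finset.sum_eq_zero fun e _ => hf e e.2
  rw [← Fintype.sum_subtype_add_sum_subtype (· ∈ G.edgeSet) f, hnot, add_zero]

theorem sum_edgeIncMatrix_row (v : V) : ∑ e, G.edgeIncMatrix v e = G.degree v := by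
  rw [edgeIncMatrix, ← G.sum_incMatrix_apply]
  exact G.sum_edgeSet_eq_sum_sym2 (G.incMatrix ℝ v) fun e he =>
    G.incMatrix_of_notMem_incidenceSet fun h => he h.1

theorem sum_edgeIncMatrix_col (e : G.edgeSet) : ∑ v, G.edgeIncMatrix v e = 2 :=
  G.sum_incMatrix_apply_of_mem_edgeSet e.2

theorem edgeIncMatrix_mul_transpose :
    G.edgeIncMatrix * G.edgeIncMatrixᵀ = signlessLaplacian G := by
  ext u v
  have h := congrFun (congrFun (G.incMatrix_mul_transpose (R := ℝ)) u) v
  simp only [mul_apply, edgeIncMatrix, transpose_apply, submatrix_apply, id] at h ⊢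
  rw [G.sum_edgeSet_eq_sum_sym2 (fun e => G.incMatrix ℝ u e * G.incMatrix ℝ v e)
    fun e he => by simp [G.incMatrix_of_notMem_incidenceSet fun h => he h.1]]
  convert h using 1
  simp only [signlessLaplacian, of_apply]
  split_ifs <;> simp_all [G.ne_of_adj]

theorem transpose_edgeIncMatrix_mul :
    G.edgeIncMatrixᵀ * G.edgeIncMatrix = (2 : ℝ) • 1 + G.lineGraph.adjMatrix ℝ := by
  ext e f
  simp only [mul_apply, transpose_apply, edgeIncMatrix_apply, ite_zero_mul_ite_zero, mul_one,
    Finset.sum_boole, Matrix.add_apply, Matrix.smul_apply, one_apply, adjMatrix_apply]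
  rcases eq_or_ne e f with rfl | hef
  · have h := G.sum_edgeIncMatrix_col e
    simp only [edgeIncMatrix_apply, Finset.sum_boole] at h
    simp [h]
  · rw [if_neg hef, smul_zero, zero_add]
    split_ifs with hadj
    · obtain ⟨-, c, hce, hcf⟩ := lineGraph_adj_iff_exists.1 hadj
      rw [Nat.cast_eq_one, Finset.card_eq_one]
      refine ⟨c, Finset.eq_singleton_iff_unique_mem.2 ⟨by simp [hce, hcf], ?_⟩⟩
      simp only [Finset.mem_filter, Finset.mem_univ, true_and]
      exact fun v hv => Sym2.eq_of_ne_of_mem_of_mem (Subtype.coe_injective.ne hef) hv.1 hv.2 hce hcf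
    · rw [Nat.cast_eq_zero, Finset.card_eq_zero, Finset.filter_eq_empty_iff]
      exact fun v _ hv => hadj (lineGraph_adj_iff_exists.2 ⟨hef, v, hv⟩)

end IncidenceMatrix

namespace IsRegularOfDegree

variable {V : Type*} [Fintype V] {G : SimpleGraph V} {r : ℕ}

theorem card_le_card_edgeSet (hG : G.IsRegularOfDegree r) (hr : 2 ≤ r) :
    Fintype.card V ≤ Fintype.card G.edgeSet := by
  have h := G.sum_degrees_eq_twice_card_edges
  simp only [hG.degree_eq, Finset.sum_const, Finset.card_univ, smul_eq_mul,
    G.edgeFinset_card] at h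
  nlinarith

theorem lineGraph_degree_add_two (hG : G.IsRegularOfDegree r) (e : G.edgeSet) :
    G.lineGraph.degree e + 2 = 2 * r := by
  have hrow : ∑ f, (G.edgeIncMatrixᵀ * G.edgeIncMatrix) e f = 2 * r := by
    simp only [mul_apply, transpose_apply]
    rw [Finset.sum_comm]
    simp_rw [← Finset.mul_sum, G.sum_edgeIncMatrix_row, hG.degree_eq, ← Finset.sum_mul,
      G.sum_edgeIncMatrix_col]
  rw [transpose_edgeIncMatrix_mul] at hrow
  simp only [Matrix.add_apply, Matrix.smul_apply, one_apply, smul_eq_mul, mul_ite, mul_one,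
    mul_zero, Finset.sum_add_distrib, Finset.sum_ite_eq, Finset.mem_univ, if_true, adjMatrix_apply,
    sum_ite_adj_eq_degree] at hrow
  exact_mod_cast (by linarith : (G.lineGraph.degree e : ℝ) + 2 = 2 * r)

theorem signlessLaplacian_lineGraph (hG : G.IsRegularOfDegree r) :
    signlessLaplacian G.lineGraph = G.edgeIncMatrixᵀ * G.edgeIncMatrix + (2 * r - 4 : ℝ) • 1 := by
  ext e f
  have hdeg : (G.lineGraph.degree e : ℝ) + 2 = 2 * r := by
    exact_mod_cast hG.lineGraph_degree_add_two e
  rw [transpose_edgeIncMatrix_mul]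
  rcases eq_or_ne e f with rfl | hef
  · simp [signlessLaplacian]
    linarith
  · simp [signlessLaplacian, hef]

theorem fQ_lineGraph (hG : G.IsRegularOfDegree r) (hle : Fintype.card V ≤ Fintype.card G.edgeSet)
    (x : ℝ) :
    fQ G.lineGraph x =
      (x - 2 * r + 4) ^ (Fintype.card G.edgeSet - Fintype.card V) * fQ G (x - 2 * r + 4) := by
  have hshift :
      fQ G.lineGraph x = det ((x - 2 * r + 4) • 1 - G.edgeIncMatrixᵀ * G.edgeIncMatrix) := by
    rw [fQ, hG.signlessLaplacian_lineGraph]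
    congr 1
    ext e f
    by_cases hef : e = f <;> simp [hef]
    ring
  rw [hshift, fQ, ← G.edgeIncMatrix_mul_transpose, det_smul_one_sub_eq_eval_charpoly,
    det_smul_one_sub_eq_eval_charpoly, charpoly_mul_comm_of_le _ _ hle, Polynomial.eval_mul,
    Polynomial.eval_pow, Polynomial.eval_X]

end IsRegularOfDegree

end SimpleGraph

section ZeroPlusOne

variable {V : Type*} [Fintype V] (G : SimpleGraph V)

theorem degree_xyzTransform_zero_plus_one_inl (v : V) :
    ((xyzTransform G .zero .plus .one).degree (Sum.inl v) : ℝ) = Fintype.card G.edgeSet := by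
  rw [← SimpleGraph.sum_ite_adj_eq_degree, Fintype.sum_sum_type]
  simp [xyzTransform, XYZ.rel, XYZ.inc]

theorem degree_xyzTransform_zero_plus_one_inr (e : G.edgeSet) :
    ((xyzTransform G .zero .plus .one).degree (Sum.inr e) : ℝ) =
      Fintype.card V + G.lineGraph.degree e := by
  rw [← SimpleGraph.sum_ite_adj_eq_degree, ← G.lineGraph.sum_ite_adj_eq_degree,
    Fintype.sum_sum_type]
  congr 1
  simp [xyzTransform, XYZ.inc]

theorem signlessLaplacian_xyzTransform_zero_plus_one :
    signlessLaplacian (xyzTransform G .zero .plus .one) =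
      fromBlocks ((Fintype.card G.edgeSet : ℝ) • 1) (of fun _ _ => 1) (of fun _ _ => 1)
        ((Fintype.card V : ℝ) • 1 + signlessLaplacian G.lineGraph) := by
  ext (u | e) (v | f)
  · by_cases huv : u = v
    · subst huv
      simp only [signlessLaplacian, of_apply, degree_xyzTransform_zero_plus_one_inl]
      simp [xyzTransform, XYZ.rel]
    · simp [signlessLaplacian, huv, xyzTransform, XYZ.rel]
  · simp [signlessLaplacian, xyzTransform, XYZ.inc]
  · simp [signlessLaplacian, xyzTransform, XYZ.inc]
  · by_cases hef : e = f
    · subst hef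
      simp only [signlessLaplacian, of_apply, degree_xyzTransform_zero_plus_one_inr]
      simp [xyzTransform, XYZ.rel]
    · simp [signlessLaplacian, hef, xyzTransform, XYZ.rel]
      by_cases hadj : G.lineGraph.Adj e f <;> simp [hadj]

theorem fQ_xyzTransform_zero_plus_one (x : ℝ) :
    fQ (xyzTransform G .zero .plus .one) x =
      det (fromBlocks ((x - Fintype.card G.edgeSet) • (1 : Matrix V V ℝ)) (-of fun _ _ => 1)
        (-of fun _ _ => 1) ((x - Fintype.card V) • 1 - signlessLaplacian G.lineGraph)) := by
  rw [fQ, signlessLaplacian_xyzTransform_zero_plus_one]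
  congr 1
  ext (u | e) (v | f)
  · by_cases huv : u = v <;> simp [one_apply, huv]
  · simp
  · simp
  · by_cases hef : e = f <;> simp [one_apply, hef]
    ring

variable {G} {r : ℕ}

theorem SimpleGraph.IsRegularOfDegree.mul_fQ_xyzTransform_zero_plus_one
    (hG : G.IsRegularOfDegree r) {x : ℝ} (hm : x - Fintype.card G.edgeSet ≠ 0)
    (hb : x - Fintype.card V - 4 * r + 4 ≠ 0) :
    (x - Fintype.card G.edgeSet) * (x - Fintype.card V - 4 * r + 4) *
        fQ (xyzTransform G .zero .plus .one) x =
      (x - Fintype.card G.edgeSet) ^ Fintype.card V *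
        ((x - Fintype.card G.edgeSet) * (x - Fintype.card V - 4 * r + 4) -
          Fintype.card G.edgeSet * Fintype.card V) * fQ G.lineGraph (x - Fintype.card V) := by
  have hrow : ∀ e, ∑ f, ((x - Fintype.card V) • 1 - signlessLaplacian G.lineGraph) e f =
      x - Fintype.card V - 4 * r + 4 := by
    intro e
    have hdeg : (G.lineGraph.degree e : ℝ) + 2 = 2 * r := by
      exact_mod_cast hG.lineGraph_degree_add_two e
    simp only [Matrix.sub_apply, Matrix.smul_apply, one_apply, smul_eq_mul, mul_ite, mul_one,
      mul_zero, Finset.sum_sub_distrib, Finset.sum_ite_eq, Finset.mem_univ, if_true,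
      sum_signlessLaplacian_apply]
    linarith
  -- `fQ` and the block matrix carry different `DecidableEq G.edgeSet` instances in their `1`.
  have hfQ : fQ G.lineGraph (x - Fintype.card V) =
      det ((x - Fintype.card V) • 1 - signlessLaplacian G.lineGraph) := by
    rw [fQ]
    congr!
  rw [hfQ, fQ_xyzTransform_zero_plus_one, mul_det_fromBlocks_smul_one_neg_allOnes hm hb hrow]
  ring

end ZeroPlusOne

theorem signless_charpoly_xyz_zp1 {V : Type*} [Fintype V] (G : SimpleGraph V) (r n m : ℕ)
    (hn : Fintype.card V = n) (hm : Fintype.card G.edgeSet = m)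
    (hreg : G.IsRegularOfDegree r) (hr2 : 2 ≤ r) (hn0 : 0 < n)
    (q : Fin n → ℝ)
    (hlast : q ⟨n - 1, by omega⟩ = 2 * r)
    (hq : ∀ x : ℝ, fQ G x = ∏ i : Fin n, (x - q i)) :
    ∀ lam : ℝ,
      fQ (xyzTransform G XYZ.zero XYZ.plus XYZ.one) lam =
        ((lam - m) * (lam - n - 4 * r + 4) - m * n) * (lam - n - 2 * r + 4) ^ (m - n) *
          (lam - m) ^ (n - 1) *
          ∏ i : Fin (n - 1), (lam - n - 2 * r + 4 - (q (Fin.castLE (Nat.sub_le n 1) i))) := by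
  have hnm : n ≤ m := hn ▸ hm ▸ hreg.card_le_card_edgeSet hr2
  subst hn hm
  have hdense : Dense ({(Fintype.card G.edgeSet : ℝ), (Fintype.card V : ℝ) + 4 * r - 4} : Set ℝ)ᶜ :=
    (Set.toFinite _).countable.dense_compl ℝ
  refine funext_iff.1 <| (continuous_fQ _).ext_on hdense (by fun_prop) fun x hx => ?_
  simp only [Set.mem_compl_iff, Set.mem_insert_iff, Set.mem_singleton_iff, not_or] at hx
  have ha : x - Fintype.card G.edgeSet ≠ 0 := sub_ne_zero.2 hx.1
  have hb : x - Fintype.card V - 4 * r + 4 ≠ 0 := fun h => hx.2 (by linarith)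
  refine mul_left_cancel₀ (mul_ne_zero ha hb) ?_
  rw [hreg.mul_fQ_xyzTransform_zero_plus_one ha hb, hreg.fQ_lineGraph hnm, hq,
    Fin.prod_univ_eq_mul_prod_castLE hn0, hlast, ← pow_sub_one_mul hn0.ne']
  ring
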